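/- Let T be a tree (a connected acyclic graph) and S a finite nonempty set of vertices of T. Define the center of S to be the middle vertex or middle edge of a longest path in T between two vertices of S. Then the center is well-defined: any two longest paths between vertices of S have the same middle vertex (if the maximal distance is even) or the same middle edge (if it is odd). -/

import Mathlib

/-!
Call `w` *between* `u` and `v` when `d(u, w) + d(w, v) = d(u, v)`. In a tree the betweenness
relation has a median property: if `w` is between `u` and `v`, then for every `x` it is between
`x` and `u` or between `x` and `v`, because the walk `u → x → v` must pass through the unique
`u`–`v` path. Hence if `u₀, v₀ ∈ S` realise the diameter `d` of `S` and `w` lies on the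
`u₀`–`v₀` path, every point of `S` is within `max (d(u₀, w), d(w, v₀))` of `w`. For the middle
vertex this bound forces every diametral pair of `S` to be split exactly in the middle by it; for
the two ends of the middle edge the same holds once one knows that the distances from any point
to two adjacent vertices of a tree differ by exactly one. Uniqueness holds because a point
between `u₀` and `v₀` is determined by its distance to `u₀`.
-/

namespace SimpleGraph

variable {V : Type*} {G : SimpleGraph V}

lemma IsAcyclic.length_eq_dist_of_isPath (hG : G.IsAcyclic) {u v : V} {p : G.Walk u v}
    (hp : p.IsPath) : p.length = G.dist u v := by
  obtain ⟨q, hq, hql⟩ := p.reachable.exists_path_of_dist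
  have hpq : p = q := congrArg Subtype.val ((hG.subsingleton_path u v).elim ⟨p, hp⟩ ⟨q, hq⟩)
  rw [hpq, hql]

lemma IsAcyclic.dist_add_dist_of_mem_support (hG : G.IsAcyclic) {u v w : V} {p : G.Walk u v}
    (hp : p.IsPath) (hw : w ∈ p.support) : G.dist u w + G.dist w v = G.dist u v := by
  classical
  rw [← hG.length_eq_dist_of_isPath (hp.takeUntil hw),
    ← hG.length_eq_dist_of_isPath (hp.dropUntil hw), ← hG.length_eq_dist_of_isPath hp,
    ← Walk.length_append, p.take_spec hw]

lemma Walk.dist_getVert_of_length_eq_dist {u v : V} (p : G.Walk u v)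
    (hp : p.length = G.dist u v) {k : ℕ} (hk : k ≤ p.length) :
    G.dist u (p.getVert k) = k ∧ G.dist (p.getVert k) v = p.length - k := by
  have hfst : G.dist u (p.getVert k) ≤ k := by
    simpa [p.take_length k, hk] using dist_le (p.take k)
  have hsnd : G.dist (p.getVert k) v ≤ p.length - k := by
    simpa using dist_le (p.drop k)
  have htri := (p.take k).reachable.dist_triangle_left v
  omega

lemma IsTree.dist_add_dist_eq_or_dist_add_dist_eq (hG : G.IsTree) {u v w : V}
    (hw : G.dist u w + G.dist w v = G.dist u v) (x : V) :
    G.dist u w + G.dist w x = G.dist u x ∨ G.dist x w + G.dist w v = G.dist x v := by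
  classical
  obtain ⟨q₁, -, hq₁⟩ := hG.connected.exists_path_of_dist u w
  obtain ⟨q₂, -, hq₂⟩ := hG.connected.exists_path_of_dist w v
  have hq : (q₁.append q₂).IsPath := by
    apply Walk.isPath_of_length_eq_dist
    rw [Walk.length_append, hq₁, hq₂, hw]
  obtain ⟨r₁, hr₁, -⟩ := hG.connected.exists_path_of_dist u x
  obtain ⟨r₂, hr₂, -⟩ := hG.connected.exists_path_of_dist x v
  set r := r₁.append r₂
  have hbypass : r.bypass = q₁.append q₂ := congrArg Subtype.val
    ((hG.isAcyclic.subsingleton_path u v).elim ⟨_, r.bypass_isPath⟩ ⟨_, hq⟩)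
  have hwr : w ∈ r.support := by
    apply r.support_bypass_subset_support
    rw [hbypass, Walk.mem_support_append_iff]
    exact Or.inl q₁.end_mem_support
  rw [Walk.mem_support_append_iff] at hwr
  exact hwr.imp (hG.isAcyclic.dist_add_dist_of_mem_support hr₁)
    (hG.isAcyclic.dist_add_dist_of_mem_support hr₂)

lemma IsTree.eq_of_dist_add_dist_eq (hG : G.IsTree) {u v w w' : V}
    (hw : G.dist u w + G.dist w v = G.dist u v) (hw' : G.dist u w' + G.dist w' v = G.dist u v)
    (h : G.dist u w = G.dist u w') : w = w' := by
  rcases hG.dist_add_dist_eq_or_dist_add_dist_eq hw w' with h' | h'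
  · exact hG.connected.dist_eq_zero_iff.mp (by omega)
  · exact (hG.connected.dist_eq_zero_iff.mp (by omega)).symm

lemma IsTree.dist_le_max_of_dist_add_dist_eq (hG : G.IsTree) {u v w x : V}
    (hw : G.dist u w + G.dist w v = G.dist u v)
    (hux : G.dist u x ≤ G.dist u v) (hxv : G.dist x v ≤ G.dist u v) :
    G.dist x w ≤ max (G.dist u w) (G.dist w v) := by
  have := hG.dist_add_dist_eq_or_dist_add_dist_eq hw x
  rw [dist_comm (u := w)] at this
  omega

lemma IsTree.existsUnique_middle_vertex (hG : G.IsTree) {S : Set V} {u₀ v₀ : V}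
    (hu₀ : u₀ ∈ S) (hv₀ : v₀ ∈ S) (hmax : ∀ u ∈ S, ∀ v ∈ S, G.dist u v ≤ G.dist u₀ v₀)
    {m : ℕ} (hm : G.dist u₀ v₀ = 2 * m) :
    ∃! w : V, ∀ u ∈ S, ∀ v ∈ S, G.dist u v = G.dist u₀ v₀ →
      G.dist u w = m ∧ G.dist w v = m := by
  obtain ⟨p, -, hp⟩ := hG.connected.exists_path_of_dist u₀ v₀
  obtain ⟨hu₀w, hwv₀⟩ := p.dist_getVert_of_length_eq_dist hp (k := m) (by omega)
  set w := p.getVert m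
  have hw : G.dist u₀ w + G.dist w v₀ = G.dist u₀ v₀ := by omega
  have hSw : ∀ x ∈ S, G.dist x w ≤ m := fun x hx => by
    have := hG.dist_le_max_of_dist_add_dist_eq hw (hmax u₀ hu₀ x hx) (hmax x hx v₀ hv₀)
    omega
  refine ⟨w, fun u hu v hv huv => ?_, fun w' hw' => ?_⟩
  · have hu := hSw u hu
    have hv := hSw v hv
    have htri : G.dist u v ≤ G.dist u w + G.dist w v := hG.connected.dist_triangle
    rw [dist_comm (u := v)] at hv
    omega
  · obtain ⟨h₁, h₂⟩ := hw' u₀ hu₀ v₀ hv₀ rfl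
    exact hG.eq_of_dist_add_dist_eq (by omega) hw (by omega)

lemma IsTree.existsUnique_middle_edge (hG : G.IsTree) {S : Set V} {u₀ v₀ : V}
    (hu₀ : u₀ ∈ S) (hv₀ : v₀ ∈ S) (hmax : ∀ u ∈ S, ∀ v ∈ S, G.dist u v ≤ G.dist u₀ v₀)
    {m : ℕ} (hm : G.dist u₀ v₀ = 2 * m + 1) :
    ∃! e : Sym2 V, e ∈ G.edgeSet ∧ ∀ u ∈ S, ∀ v ∈ S, G.dist u v = G.dist u₀ v₀ →
      ∃ w₁ w₂ : V, e = s(w₁, w₂) ∧ G.dist u w₁ = m ∧ G.dist u w₂ = m + 1 ∧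
        G.dist w₁ v = m + 1 ∧ G.dist w₂ v = m := by
  obtain ⟨p, -, hp⟩ := hG.connected.exists_path_of_dist u₀ v₀
  have hadj := p.adj_getVert_succ (i := m) (by omega)
  obtain ⟨hu₀w₁, hw₁v₀⟩ := p.dist_getVert_of_length_eq_dist hp (k := m) (by omega)
  obtain ⟨hu₀w₂, hw₂v₀⟩ := p.dist_getVert_of_length_eq_dist hp (k := m + 1) (by omega)
  set w₁ := p.getVert m
  set w₂ := p.getVert (m + 1)
  have hw₁ : G.dist u₀ w₁ + G.dist w₁ v₀ = G.dist u₀ v₀ := by omega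
  have hw₂ : G.dist u₀ w₂ + G.dist w₂ v₀ = G.dist u₀ v₀ := by omega
  have hSw : ∀ x ∈ S, G.dist x w₁ ≤ m + 1 ∧ G.dist x w₂ ≤ m + 1 := fun x hx => by
    have := hG.dist_le_max_of_dist_add_dist_eq hw₁ (hmax u₀ hu₀ x hx) (hmax x hx v₀ hv₀)
    have := hG.dist_le_max_of_dist_add_dist_eq hw₂ (hmax u₀ hu₀ x hx) (hmax x hx v₀ hv₀)
    omega
  refine ⟨s(w₁, w₂), ⟨hadj, fun u hu v hv huv => ?_⟩, ?_⟩
  · have hu := hSw u hu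
    have hv := hSw v hv
    have htri₁ : G.dist u v ≤ G.dist u w₁ + G.dist w₁ v := hG.connected.dist_triangle
    have htri₂ : G.dist u v ≤ G.dist u w₂ + G.dist w₂ v := hG.connected.dist_triangle
    have hstep_u := hG.dist_eq_dist_add_one_of_adj u hadj
    have hstep_v := hG.dist_eq_dist_add_one_of_adj v hadj
    rw [dist_comm (u := v), dist_comm (u := v)] at hv hstep_v
    rcases hstep_u with h | h
    · exact ⟨w₂, w₁, Sym2.eq_swap, by omega, by omega, by omega, by omega⟩
    · exact ⟨w₁, w₂, rfl, by omega, by omega, by omega, by omega⟩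
  · rintro e ⟨-, he⟩
    obtain ⟨a, b, rfl, h₁, h₂, h₃, h₄⟩ := he u₀ hu₀ v₀ hv₀ rfl
    rw [hG.eq_of_dist_add_dist_eq (w := a) (by omega) hw₁ (by omega),
      hG.eq_of_dist_add_dist_eq (w := b) (by omega) hw₂ (by omega)]

end SimpleGraph

theorem tree_center_well_defined
    (V : Type*) (T : SimpleGraph V) (hT : T.IsTree)
    (S : Finset V) (hS : S.Nonempty)
    (d : ℕ) (hd : d = (S ×ˢ S).sup fun p => T.dist p.1 p.2) :
    (∀ m : ℕ, d = 2 * m →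
      ∃! w : V, ∀ u ∈ S, ∀ v ∈ S, T.dist u v = d →
        T.dist u w = m ∧ T.dist w v = m) ∧
    (∀ m : ℕ, d = 2 * m + 1 →
      ∃! e : Sym2 V, e ∈ T.edgeSet ∧ ∀ u ∈ S, ∀ v ∈ S, T.dist u v = d →
        ∃ w₁ w₂ : V, e = s(w₁, w₂) ∧ T.dist u w₁ = m ∧ T.dist u w₂ = m + 1 ∧
          T.dist w₁ v = m + 1 ∧ T.dist w₂ v = m) := by
  obtain ⟨⟨u₀, v₀⟩, huv₀, hsup⟩ :=
    (S ×ˢ S).exists_mem_eq_sup (hS.product hS) fun p => T.dist p.1 p.2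
  obtain ⟨hu₀, hv₀⟩ := Finset.mem_product.mp huv₀
  have hmax : ∀ u ∈ (S : Set V), ∀ v ∈ (S : Set V), T.dist u v ≤ T.dist u₀ v₀ :=
    fun u hu v hv => (Finset.le_sup (f := fun p => T.dist p.1 p.2)
      (Finset.mem_product.mpr ⟨hu, hv⟩ : (u, v) ∈ S ×ˢ S)).trans_eq hsup
  obtain rfl : d = T.dist u₀ v₀ := hd.trans hsup
  exact ⟨fun m hm => hT.existsUnique_middle_vertex hu₀ hv₀ hmax hm,
    fun m hm => hT.existsUnique_middle_edge hu₀ hv₀ hmax hm⟩
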